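/- Let G = (V,E) be an M weight-bounded linear weighted graph and let tsm weakly satisfy G with no gtFr-geqFr* cycle. Define ts_1(v) as the maximum number of gtFr edges used by any path in (V, geqFr) starting from v, and ts_0 inductively by ts_0(1) = 0, ts_0(i+1) = ts_0(i) + dtsm(i,i+1). Then ts(v) = ts_0(v) + ts_1(v)/(|V|+1) is a monotone realization of G satisfying all mixed constraints, in particular ts(v) - ts(u) < α for every strict edge (u,<,α,v). -/

import Mathlib

open Finset

/-- A weighted constraint edge: `ts tgt - ts src ◁ wt` where ◁ is `<` if `strict` else `≤`. -/
structure WEdge where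
  src : ℕ
  strict : Bool
  wt : ℤ
  tgt : ℕ
deriving DecidableEq

/-- `ts` satisfies the constraint of edge `e`. -/
def satEdge (ts : ℕ → ℝ) (e : WEdge) : Prop :=
  if e.strict then ts e.tgt - ts e.src < (e.wt : ℝ) else ts e.tgt - ts e.src ≤ (e.wt : ℝ)

/-- `ts` realizes the linear weighted graph on vertices `{1,…,n}` with edge set `E`:
monotone w.r.t. the linear order and all difference constraints hold. -/
def Realizes (n : ℕ) (E : Finset WEdge) (ts : ℕ → ℝ) : Prop :=
  (∀ u v : ℕ, 1 ≤ u → u ≤ v → v ≤ n → ts u ≤ ts v) ∧ ∀ e ∈ E, satEdge ts e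

/-- Integer parts of consecutive time-stamps differ by at least 0 and at most `M - 1`. -/
def SlowlyMonotone (M : ℤ) (n : ℕ) (ts : ℕ → ℝ) : Prop :=
  ∀ i : ℕ, 1 ≤ i → i < n → 0 ≤ ⌊ts (i + 1)⌋ - ⌊ts i⌋ ∧ ⌊ts (i + 1)⌋ - ⌊ts i⌋ ≤ M - 1

/-- All edges of the graph have endpoints in `{1,…,n}`. -/
def InGraph (n : ℕ) (E : Finset WEdge) : Prop :=
  ∀ e ∈ E, 1 ≤ e.src ∧ e.src ≤ n ∧ 1 ≤ e.tgt ∧ e.tgt ≤ n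

/-- `M` weight-bounded: all weights have absolute value at most `M - 1`. -/
def WtBounded (M : ℤ) (E : Finset WEdge) : Prop := ∀ e ∈ E, |e.wt| ≤ M - 1

/-- `dtsm(u,v) = (tsm v - tsm u) mod M`. -/
def dtsm (M : ℤ) (tsm : ℕ → ℤ) (u v : ℕ) : ℤ := (tsm v - tsm u) % M

/-- `dtsm⁺(u,v)`, for `u ≤ v`: the cumulative sum of consecutive `dtsm`'s, capped at `M`. -/
def dtsmP (M : ℤ) (tsm : ℕ → ℤ) (u v : ℕ) : ℤ :=
  min M (∑ i ∈ Finset.Ico u v, dtsm M tsm i (i + 1))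

/-- Antisymmetric extension of `dtsm⁺` to arbitrary pairs. -/
def dtsmE (M : ℤ) (tsm : ℕ → ℤ) (u v : ℕ) : ℤ :=
  if u ≤ v then dtsmP M tsm u v else - dtsmP M tsm v u

/-- `(u,v)` is `tsm`-big. -/
def TsmBig (M : ℤ) (tsm : ℕ → ℤ) (u v : ℕ) : Prop :=
  ∃ w1 w2 : ℕ, u ≤ w1 ∧ w1 < w2 ∧ w2 ≤ v ∧ M ≤ dtsm M tsm u w1 + dtsm M tsm w1 w2

/-- `tsm` is a time-stamping modulo `M` on vertices `{1,…,n}`. -/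
def TSM (M : ℤ) (n : ℕ) (tsm : ℕ → ℤ) : Prop :=
  ∀ v, 1 ≤ v → v ≤ n → 0 ≤ tsm v ∧ tsm v < M

/-- `tsm` weakly satisfies the graph (forward/backward conditions). -/
def WeaklySat (M : ℤ) (E : Finset WEdge) (tsm : ℕ → ℤ) : Prop :=
  ∀ e ∈ E,
    (e.src ≤ e.tgt → ¬ TsmBig M tsm e.src e.tgt ∧ dtsm M tsm e.src e.tgt ≤ e.wt) ∧
    (e.tgt < e.src → TsmBig M tsm e.tgt e.src ∨ - e.wt ≤ dtsm M tsm e.tgt e.src)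

/-- `(u,v) ∈ geqFr`: fractional part of `ts u` must be ≥ that of `ts v`. -/
def geqFr (M : ℤ) (tsm : ℕ → ℤ) (E : Finset WEdge) (u v : ℕ) : Prop :=
  (∃ e ∈ E, e.src = u ∧ e.tgt = v ∧ dtsmE M tsm u v = e.wt) ∨
  (v + 1 = u ∧ dtsmE M tsm u v = 0)

/-- `(u,v) ∈ gtFr`: fractional part of `ts u` must be > that of `ts v`. -/
def gtFr (M : ℤ) (tsm : ℕ → ℤ) (E : Finset WEdge) (u v : ℕ) : Prop :=
  ∃ e ∈ E, e.strict = true ∧ e.src = u ∧ e.tgt = v ∧ dtsmE M tsm u v = e.wt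

open Classical in
/-- Number of `gtFr` edges used by the path `p 0, p 1, …, p k`. -/
noncomputable def gtCount (M : ℤ) (tsm : ℕ → ℤ) (E : Finset WEdge) (k : ℕ) (p : ℕ → ℕ) : ℕ :=
  ((Finset.range k).filter (fun i => gtFr M tsm E (p i) (p (i + 1)))).card

/-!
The integer part `ts_0` is the prefix sum of the `dtsm` steps. Since every weight has absolute
value below `M`, the cap in `dtsm⁺` is invisible on edges, so weak satisfaction says exactly that
`ts_0` satisfies each constraint non-strictly, with equality only on edges in `geqFr` (in `gtFr`
when strict); likewise `ts_0` stalls only at `geqFr` steps `(i + 1, i)`. Ties are broken by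
`ts_1 / (n + 1) ∈ [0, 1)`: prepending an edge to a path shows that `ts_1` decreases weakly along
`geqFr` and strictly along `gtFr`, and `ts_1 ≤ n` because without `gtFr-geqFr*` cycles the `gtFr`
edges of a `geqFr`-path have distinct sources.
-/

lemma dtsm_nonneg {M : ℤ} (hM : M ≠ 0) (tsm : ℕ → ℤ) (u v : ℕ) : 0 ≤ dtsm M tsm u v :=
  Int.emod_nonneg _ hM

lemma Relation.ReflTransGen.of_path {α : Type*} {r : α → α → Prop} {k : ℕ} {p : ℕ → α}
    (hp : ∀ i < k, r (p i) (p (i + 1))) {a b : ℕ} (hab : a ≤ b) (hb : b ≤ k) :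
    Relation.ReflTransGen r (p a) (p b) :=
  (reflTransGen_of_succ_of_le (fun i j => r (p i) (p j))
    (fun i hi => hp i (hi.2.trans_le hb)) hab).lift p fun _ _ => id

/-- The integer part `ts_0` of the construction. -/
def ts0 (M : ℤ) (tsm : ℕ → ℤ) (v : ℕ) : ℤ := ∑ i ∈ Finset.Ico 1 v, dtsm M tsm i (i + 1)

section Integral

variable {M : ℤ} {tsm : ℕ → ℤ}

lemma ts0_succ {i : ℕ} (hi : 1 ≤ i) : ts0 M tsm (i + 1) = ts0 M tsm i + dtsm M tsm i (i + 1) :=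
  Finset.sum_Ico_succ_top hi _

lemma ts0_sub_eq_sum {u v : ℕ} (hu : 1 ≤ u) (huv : u ≤ v) :
    ts0 M tsm v - ts0 M tsm u = ∑ i ∈ Finset.Ico u v, dtsm M tsm i (i + 1) := by
  rw [ts0, ts0, ← Finset.sum_Ico_consecutive _ hu huv]
  ring

lemma ts0_mono (hM : M ≠ 0) {u v : ℕ} (hu : 1 ≤ u) (huv : u ≤ v) : ts0 M tsm u ≤ ts0 M tsm v := by
  rw [← sub_nonneg, ts0_sub_eq_sum hu huv]
  exact Finset.sum_nonneg fun i _ => dtsm_nonneg hM tsm i (i + 1)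

lemma dtsmE_eq_clamp (hM : 0 < M) {u v : ℕ} (hu : 1 ≤ u) (hv : 1 ≤ v) :
    dtsmE M tsm u v = max (-M) (min M (ts0 M tsm v - ts0 M tsm u)) := by
  by_cases huv : u ≤ v
  · have := ts0_mono (tsm := tsm) hM.ne' hu huv
    rw [dtsmE, if_pos huv, dtsmP, ← ts0_sub_eq_sum hu huv]
    omega
  · have hvu := (not_le.mp huv).le
    have := ts0_mono (tsm := tsm) hM.ne' hv hvu
    rw [dtsmE, if_neg huv, dtsmP, ← ts0_sub_eq_sum hv hvu]
    omega

lemma ts0_sub_le_of_dtsmE_le (hM : 0 < M) {u v : ℕ} {w : ℤ} (hu : 1 ≤ u) (hv : 1 ≤ v)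
    (hw : |w| ≤ M - 1) (hd : dtsmE M tsm u v ≤ w) :
    ts0 M tsm v - ts0 M tsm u ≤ w ∧ (ts0 M tsm v - ts0 M tsm u = w → dtsmE M tsm u v = w) := by
  have := abs_le.mp hw
  rw [dtsmE_eq_clamp hM hu hv] at hd ⊢
  omega

lemma geqFr_succ_of_ts0_eq (E : Finset WEdge) (hM : 0 < M) {i : ℕ} (hi : 1 ≤ i)
    (h : ts0 M tsm i = ts0 M tsm (i + 1)) : geqFr M tsm E (i + 1) i := by
  refine Or.inr ⟨rfl, ?_⟩
  rw [dtsmE_eq_clamp hM (by omega) hi]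
  omega

end Integral

section Fractional

variable {M : ℤ} {tsm : ℕ → ℤ} {E : Finset WEdge}

def IsMaxGtCount (M : ℤ) (tsm : ℕ → ℤ) (E : Finset WEdge) (ts1 : ℕ → ℕ) : Prop :=
  ∀ v : ℕ,
    (∀ (k : ℕ) (p : ℕ → ℕ), p 0 = v → (∀ i < k, geqFr M tsm E (p i) (p (i + 1))) →
      gtCount M tsm E k p ≤ ts1 v) ∧
    (∃ (k : ℕ) (p : ℕ → ℕ), p 0 = v ∧ (∀ i < k, geqFr M tsm E (p i) (p (i + 1))) ∧
      gtCount M tsm E k p = ts1 v)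

lemma gtFr.geqFr {u v : ℕ} (h : gtFr M tsm E u v) : geqFr M tsm E u v :=
  let ⟨e, he, _, hs, ht, hw⟩ := h
  Or.inl ⟨e, he, hs, ht, hw⟩

open Classical in
lemma gtCount_cons (k u : ℕ) (p : ℕ → ℕ) :
    gtCount M tsm E (k + 1) (fun | 0 => u | i + 1 => p i) =
      gtCount M tsm E k p + if gtFr M tsm E u (p 0) then 1 else 0 := by
  simp only [gtCount, Finset.card_filter]
  rw [Finset.sum_range_succ']

/-- A repeated source of two `gtFr` edges on a `geqFr`-path would close a `gtFr-geqFr*` cycle,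
so the sources are distinct vertices of the graph. -/
lemma gtCount_le {n : ℕ} (hG : InGraph n E)
    (hnc : ¬ ∃ u v : ℕ, gtFr M tsm E u v ∧ Relation.ReflTransGen (geqFr M tsm E) v u)
    {k : ℕ} {p : ℕ → ℕ} (hp : ∀ i < k, geqFr M tsm E (p i) (p (i + 1))) :
    gtCount M tsm E k p ≤ n := by
  classical
  have hsrc_ne : ∀ i j, i < j → j ≤ k → gtFr M tsm E (p i) (p (i + 1)) → p i ≠ p j :=
    fun i j hij hjk hgt heq => hnc ⟨p i, p (i + 1), hgt, heq ▸ .of_path hp hij hjk⟩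
  set S := {i ∈ Finset.range k | gtFr M tsm E (p i) (p (i + 1))}
  have hinj : Set.InjOn p S := by
    intro i hi j hj heq
    simp only [S, Finset.coe_filter, Finset.mem_range, Set.mem_ofPred_eq] at hi hj
    rcases lt_trichotomy i j with hij | hij | hij
    · exact absurd heq (hsrc_ne i j hij hj.1.le hi.2)
    · exact hij
    · exact absurd heq.symm (hsrc_ne j i hij hi.1.le hj.2)
  have hmaps : ∀ i ∈ S, p i ∈ Finset.Icc 1 n := by
    intro i hi
    obtain ⟨e, he, -, hsrc, -, -⟩ := (Finset.mem_filter.mp hi).2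
    exact Finset.mem_Icc.mpr (hsrc ▸ ⟨(hG e he).1, (hG e he).2.1⟩)
  exact (Finset.card_le_card_of_injOn p hmaps hinj).trans_eq (Nat.card_Icc 1 n)

namespace IsMaxGtCount

variable {ts1 : ℕ → ℕ} (h : IsMaxGtCount M tsm E ts1)
include h

lemma le {n : ℕ} (hG : InGraph n E)
    (hnc : ¬ ∃ u v : ℕ, gtFr M tsm E u v ∧ Relation.ReflTransGen (geqFr M tsm E) v u) (v : ℕ) :
    ts1 v ≤ n := by
  obtain ⟨k, p, -, hp, hcount⟩ := (h v).2
  exact hcount ▸ gtCount_le hG hnc hp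

open Classical in
/-- Prepend the edge `(u, v)` to a path from `v` realizing `ts1 v`. -/
lemma add_le_of_geqFr {u v : ℕ} (huv : geqFr M tsm E u v) :
    ts1 v + (if gtFr M tsm E u v then 1 else 0) ≤ ts1 u := by
  obtain ⟨k, p, hp0, hp, hcount⟩ := (h v).2
  let q : ℕ → ℕ := fun | 0 => u | i + 1 => p i
  have hq : ∀ i < k + 1, geqFr M tsm E (q i) (q (i + 1)) := by
    rintro (_ | i) hi
    · exact show geqFr M tsm E u (p 0) from hp0 ▸ huv
    · exact hp i (by omega)
  have := (h u).1 (k + 1) q rfl hq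
  rwa [gtCount_cons, hcount, hp0] at this

lemma le_of_geqFr {u v : ℕ} (huv : geqFr M tsm E u v) : ts1 v ≤ ts1 u :=
  (Nat.le_add_right _ _).trans (h.add_le_of_geqFr huv)

lemma lt_of_gtFr {u v : ℕ} (huv : gtFr M tsm E u v) : ts1 v < ts1 u := by
  classical
  simpa [huv] using h.add_le_of_geqFr huv.geqFr

end IsMaxGtCount

end Fractional

lemma add_sub_add_le_of_lex {a b w : ℤ} {x y : ℝ} (hx : 0 ≤ x) (hy : y < 1) (hab : b - a ≤ w)
    (heq : b - a = w → y ≤ x) : (b + y) - (a + x) ≤ w := by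
  rcases hab.lt_or_eq with hlt | hab
  · have : ((b - a : ℤ) : ℝ) ≤ w - 1 := by exact_mod_cast Int.le_sub_one_of_lt hlt
    push_cast at this
    linarith
  · have := heq hab
    have : ((b - a : ℤ) : ℝ) = w := congrArg _ hab
    push_cast at this
    linarith

lemma add_sub_add_lt_of_lex {a b w : ℤ} {x y : ℝ} (hx : 0 ≤ x) (hy : y < 1) (hab : b - a ≤ w)
    (heq : b - a = w → y < x) : (b + y) - (a + x) < w := by
  rcases hab.lt_or_eq with hlt | hab
  · have : ((b - a : ℤ) : ℝ) ≤ w - 1 := by exact_mod_cast Int.le_sub_one_of_lt hlt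
    push_cast at this
    linarith
  · have := heq hab
    have : ((b - a : ℤ) : ℝ) = w := congrArg _ hab
    push_cast at this
    linarith

lemma realizes_int_add_frac {n : ℕ} {E : Finset WEdge} {a : ℕ → ℤ} {f : ℕ → ℝ}
    (hf : ∀ v, 0 ≤ f v ∧ f v < 1)
    (hstep : ∀ i, 1 ≤ i → i < n → a i ≤ a (i + 1) ∧ (a i = a (i + 1) → f i ≤ f (i + 1)))
    (hedge : ∀ e ∈ E, a e.tgt - a e.src ≤ e.wt ∧
      (a e.tgt - a e.src = e.wt → if e.strict then f e.tgt < f e.src else f e.tgt ≤ f e.src)) :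
    Realizes n E (fun v => a v + f v) := by
  have hmono : MonotoneOn (fun v => (a v : ℝ) + f v) (Set.Icc 1 n) := by
    refine monotoneOn_of_le_succ Set.ordConnected_Icc fun i _ hi hi' => ?_
    obtain ⟨hle, heq⟩ := hstep i hi.1 (Order.succ_le_iff.mp hi'.2)
    have := add_sub_add_le_of_lex (a := a (i + 1)) (b := a i) (w := 0) (hf _).1 (hf i).2 (by omega)
      fun h => heq (by omega)
    simp only [Order.succ_eq_add_one, Int.cast_zero] at this ⊢
    linarith
  refine ⟨fun u v hu huv hvn => hmono ⟨hu, huv.trans hvn⟩ ⟨hu.trans huv, hvn⟩ huv, fun e he => ?_⟩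
  obtain ⟨hle, heq⟩ := hedge e he
  unfold satEdge
  split_ifs with hstrict
  · exact add_sub_add_lt_of_lex (hf _).1 (hf _).2 hle (by simpa [hstrict] using heq)
  · exact add_sub_add_le_of_lex (hf _).1 (hf _).2 hle (by simpa [hstrict] using heq)

theorem mixed_construction_realizes_general (M : ℤ) (hM : 1 ≤ M) (n : ℕ) (E : Finset WEdge)
    (hG : InGraph n E) (hW : WtBounded M E) (tsm : ℕ → ℤ)
    (hWS : ∀ e ∈ E, dtsmE M tsm e.src e.tgt ≤ e.wt)
    (hnc : ¬ ∃ u v : ℕ, gtFr M tsm E u v ∧ Relation.ReflTransGen (geqFr M tsm E) v u)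
    (ts1 : ℕ → ℕ)
    (hts1 : ∀ v : ℕ,
      (∀ (k : ℕ) (p : ℕ → ℕ), p 0 = v → (∀ i < k, geqFr M tsm E (p i) (p (i + 1))) →
        gtCount M tsm E k p ≤ ts1 v) ∧
      (∃ (k : ℕ) (p : ℕ → ℕ), p 0 = v ∧ (∀ i < k, geqFr M tsm E (p i) (p (i + 1))) ∧
        gtCount M tsm E k p = ts1 v)) :
    Realizes n E (fun v =>
      ((∑ i ∈ Finset.Ico 1 v, dtsm M tsm i (i + 1) : ℤ) : ℝ) + (ts1 v : ℝ) / (n + 1)) := by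
  have hts1 : IsMaxGtCount M tsm E ts1 := hts1
  have hMpos : 0 < M := hM
  have hfrac_le {u v : ℕ} (h : ts1 u ≤ ts1 v) : (ts1 u : ℝ) / (n + 1) ≤ ts1 v / (n + 1) := by
    gcongr
  have hfrac_lt {u v : ℕ} (h : ts1 u < ts1 v) : (ts1 u : ℝ) / (n + 1) < ts1 v / (n + 1) := by
    gcongr
  refine realizes_int_add_frac (a := ts0 M tsm) (fun v => ⟨by positivity, ?_⟩)
    (fun i hi _ => ?_) (fun e he => ?_)
  · rw [div_lt_one (by positivity)]
    exact_mod_cast Nat.lt_succ_of_le (hts1.le hG hnc v)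
  · have hd := dtsm_nonneg hMpos.ne' tsm i (i + 1)
    have hsucc := ts0_succ (M := M) (tsm := tsm) hi
    exact ⟨by omega, fun h => hfrac_le (hts1.le_of_geqFr (geqFr_succ_of_ts0_eq E hMpos hi h))⟩
  · obtain ⟨hsrc, -, htgt, -⟩ := hG e he
    obtain ⟨hle, hdE⟩ := ts0_sub_le_of_dtsmE_le hMpos hsrc htgt (hW e he) (hWS e he)
    refine ⟨hle, fun h => ?_⟩
    split_ifs with hstrict
    · exact hfrac_lt (hts1.lt_of_gtFr ⟨e, he, hstrict, rfl, rfl, hdE h⟩)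
    · exact hfrac_le (hts1.le_of_geqFr (Or.inl ⟨e, he, rfl, rfl, hdE h⟩))

theorem mixed_construction_realizes (M : ℤ) (hM : 1 ≤ M) (n : ℕ) (E : Finset WEdge)
    (hG : InGraph n E) (hW : WtBounded M E) (tsm : ℕ → ℤ) (hT : TSM M n tsm)
    (hWS : ∀ e ∈ E, dtsmE M tsm e.src e.tgt ≤ e.wt)
    (hnc : ¬ ∃ u v : ℕ, gtFr M tsm E u v ∧ Relation.ReflTransGen (geqFr M tsm E) v u)
    (ts1 : ℕ → ℕ)
    (hts1 : ∀ v : ℕ,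
      (∀ (k : ℕ) (p : ℕ → ℕ), p 0 = v → (∀ i < k, geqFr M tsm E (p i) (p (i + 1))) →
        gtCount M tsm E k p ≤ ts1 v) ∧
      (∃ (k : ℕ) (p : ℕ → ℕ), p 0 = v ∧ (∀ i < k, geqFr M tsm E (p i) (p (i + 1))) ∧
        gtCount M tsm E k p = ts1 v)) :
    Realizes n E (fun v =>
      ((∑ i ∈ Finset.Ico 1 v, dtsm M tsm i (i + 1) : ℤ) : ℝ) + (ts1 v : ℝ) / (n + 1)) :=
  mixed_construction_realizes_general M hM n E hG hW tsm hWS hnc ts1 hts1
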